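/- arXiv:math/0509322 — 2 statements merged into one kernel-verified Lean document; each statement's English description precedes it below -/
import Mathlib

section
/- For the generating function F_2(t,x,y) = sum over binary trees T of t^{|T|} (sum_{v in T} x^{l(v)}) (sum_{v in T} y^{l(v)}), where l(v) is the natural label (right steps minus left steps on the path from root to v), one has F_2(t, e^{iu}, e^{-iu}) = B(1+B)(1+2B-B^2) / ((1-B)(1+B-2B cos u)^2), where B = B(t) satisfies B = t(1+B)^2. -/
open Complex

/-- Binary trees: empty, or a root with a left and a right subtree. -/
inductive BinTree where
  | nil : BinTree
  | node : BinTree → BinTree → BinTree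

/-- Number of nodes. -/
def BinTree.size : BinTree → ℕ
  | .nil => 0
  | .node l r => l.size + r.size + 1

/-- `∑_{v ∈ T} x^{ℓ(v)}` for the natural labelling of a binary tree (root labelled 0,
left child one less, right child one more than its parent). -/
noncomputable def BinTree.labelSum : BinTree → ℂ → ℂ
  | .nil, _ => 0
  | .node l r, x => 1 + x⁻¹ * l.labelSum x + x * r.labelSum x

/-- The nonempty-binary-tree generating function `B(t) = (1-2t-√(1-4t))/(2t)`. -/
noncomputable def Bfun (t : ℝ) : ℝ := (1 - 2*t - Real.sqrt (1 - 4*t)) / (2*t)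

/-!
Write `A = ∑ t^|T|`, `G(x) = ∑ t^|T| L_T(x)` and `F = ∑ t^|T| L_T(x) L_T(x⁻¹)`, where
`L_T(x) = ∑_{v ∈ T} x^{ℓ(v)}`. For `|x| = 1` we have `|L_T(x)| ≤ |T|`, and every partial sum of
`∑ 4^{-|T|}` is at most `2`, so for `|t| < 1/4` all three series converge absolutely and may be
decomposed at the root. Since `L_{node l r}(x) = 1 + x⁻¹ L_l(x) + x L_r(x)` this gives
`A = 1 + t A²`, `G(x) (1 - t (x + x⁻¹) A) = t A²` and a linear equation for `F` in terms of `A`,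
`G(x)`, `G(x⁻¹)`. The bound `A ≤ 2` selects the root `A = 1 + B`, and solving the linear
equations with `t = B / (1 + B)²` gives the closed form.
-/

namespace BinTree

lemma node_injective : Function.Injective (fun p : BinTree × BinTree => node p.1 p.2) := by
  rintro ⟨l, r⟩ ⟨l', r'⟩ h
  simp_all

lemma hasSum_of_hasSum_node {M : Type*} [AddCommGroup M] [TopologicalSpace M]
    [IsTopologicalAddGroup M] {φ : BinTree → M} {S : M}
    (h : HasSum (fun p : BinTree × BinTree => φ (node p.1 p.2)) S) :
    HasSum φ (φ nil + S) := by
  classical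
  have hψ : HasSum (Function.update φ nil 0) S := by
    refine (node_injective.hasSum_iff fun T hT => ?_).mp ?_
    · cases T with
      | nil => simp
      | node l r => exact absurd ⟨(l, r), rfl⟩ hT
    · convert h using 2 with p
      simp
  simpa using hψ.update nil (φ nil)

lemma tsum_eq_of_node_eq_sum {R ι : Type*} [NormedCommRing R] [CompleteSpace R] [Fintype ι]
    (φ : BinTree → R) (c : ι → R) (f g : ι → BinTree → R)
    (hf : ∀ i, Summable fun T => ‖f i T‖) (hg : ∀ i, Summable fun T => ‖g i T‖)
    (hφ : ∀ l r, φ (node l r) = ∑ i, c i * (f i l * g i r)) :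
    ∑' T, φ T = φ nil + ∑ i, c i * ((∑' T, f i T) * ∑' T, g i T) := by
  refine (hasSum_of_hasSum_node ?_).tsum_eq
  simp_rw [hφ]
  refine hasSum_sum fun i _ => HasSum.mul_left (c i) ?_
  rw [tsum_mul_tsum_of_summable_norm (hf i) (hg i)]
  exact (summable_mul_of_summable_norm (hf i) (hg i)).hasSum

open Classical in
noncomputable def treesOfHeightLt : ℕ → Finset BinTree
  | 0 => ∅
  | N + 1 => insert nil ((treesOfHeightLt N ×ˢ treesOfHeightLt N).image fun p => node p.1 p.2)

lemma mem_treesOfHeightLt_of_size_lt {T : BinTree} {N : ℕ} (h : T.size < N) :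
    T ∈ treesOfHeightLt N := by
  classical
  induction T generalizing N with
  | nil =>
    obtain ⟨N, rfl⟩ := Nat.exists_eq_add_one_of_ne_zero (by omega : N ≠ 0)
    simp [treesOfHeightLt]
  | node l r ihl ihr =>
    obtain ⟨N, rfl⟩ := Nat.exists_eq_add_one_of_ne_zero (by omega : N ≠ 0)
    simp only [size] at h
    simp only [treesOfHeightLt, Finset.mem_insert, Finset.mem_image, Finset.mem_product]
    exact Or.inr ⟨(l, r), ⟨ihl (by omega), ihr (by omega)⟩, rfl⟩

section Summability

variable {r : ℝ}

/-- Induction on the height, using that `2` is a fixed point of `a ↦ 1 + a² / 4`. -/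
lemma sum_pow_size_le_two (hr0 : 0 ≤ r) (hr : r ≤ 1 / 4) (s : Finset BinTree) :
    ∑ T ∈ s, r ^ T.size ≤ 2 := by
  classical
  have hN : ∀ N, ∑ T ∈ treesOfHeightLt N, r ^ T.size ≤ 2 := by
    intro N
    induction N with
    | zero => simp [treesOfHeightLt]
    | succ N ih =>
      set S := ∑ T ∈ treesOfHeightLt N, r ^ T.size
      have hS : 0 ≤ S := Finset.sum_nonneg fun T _ => pow_nonneg hr0 _
      have hnil : nil ∉ (treesOfHeightLt N ×ˢ treesOfHeightLt N).image
          fun p : BinTree × BinTree => node p.1 p.2 := by simp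
      have hsplit : ∑ T ∈ treesOfHeightLt (N + 1), r ^ T.size = 1 + r * S ^ 2 := by
        rw [treesOfHeightLt, Finset.sum_insert hnil, Finset.sum_image node_injective.injOn,
          Finset.sum_product, sq, Finset.sum_mul_sum, Finset.mul_sum]
        simp only [size, Finset.mul_sum, pow_succ, pow_add, pow_zero]
        congr 1
        refine Finset.sum_congr rfl fun _ _ => Finset.sum_congr rfl fun _ _ => by ring
      rw [hsplit]
      nlinarith
  refine le_trans (Finset.sum_le_sum_of_subset_of_nonneg (fun T hT => ?_)
    fun T _ _ => pow_nonneg hr0 _) (hN (s.sup size + 1))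
  exact mem_treesOfHeightLt_of_size_lt (Nat.lt_succ_of_le (Finset.le_sup hT))

lemma summable_pow_size (hr0 : 0 ≤ r) (hr : r ≤ 1 / 4) :
    Summable fun T : BinTree => r ^ T.size :=
  summable_of_sum_le (fun _ => pow_nonneg hr0 _) (sum_pow_size_le_two hr0 hr)

lemma tsum_pow_size_le_two (hr0 : 0 ≤ r) (hr : r ≤ 1 / 4) :
    ∑' T : BinTree, r ^ T.size ≤ 2 :=
  (summable_pow_size hr0 hr).tsum_le_of_sum_le (sum_pow_size_le_two hr0 hr)

lemma summable_pow_size_mul_pow (hr0 : 0 ≤ r) (hr : r < 1 / 4) (k : ℕ) :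
    Summable fun T : BinTree => r ^ T.size * (T.size : ℝ) ^ k := by
  have hq : |4 * r| < 1 := by rw [abs_of_nonneg (by positivity)]; linarith
  obtain ⟨C, hC⟩ := (tendsto_pow_const_mul_const_pow_of_abs_lt_one k hq).bddAbove_range
  refine .of_nonneg_of_le (fun _ => by positivity) (fun T => ?_)
    ((summable_pow_size (by norm_num) le_rfl).mul_left C)
  calc r ^ T.size * (T.size : ℝ) ^ k
      = (1 / 4) ^ T.size * ((T.size : ℝ) ^ k * (4 * r) ^ T.size) := by
        have h4 : (1 / 4 : ℝ) ^ T.size * 4 ^ T.size = 1 := by rw [← mul_pow]; norm_num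
        linear_combination (-(r ^ T.size * (T.size : ℝ) ^ k)) * h4
    _ ≤ C * (1 / 4) ^ T.size := by
        rw [mul_comm C]; gcongr; exact hC ⟨T.size, rfl⟩

end Summability

lemma summable_norm_pow_size_mul {𝕜 : Type*} [NormedDivisionRing 𝕜] {t : 𝕜} (ht : ‖t‖ < 1 / 4)
    {h : BinTree → 𝕜} {k : ℕ} (hh : ∀ T, ‖h T‖ ≤ (T.size : ℝ) ^ k) :
    Summable fun T => ‖t ^ T.size * h T‖ := by
  refine .of_nonneg_of_le (fun _ => norm_nonneg _) (fun T => ?_)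
    (summable_pow_size_mul_pow (norm_nonneg t) ht k)
  rw [norm_mul, norm_pow]
  gcongr
  exact hh T

lemma norm_labelSum_le {x : ℂ} (hx : ‖x‖ = 1) (T : BinTree) : ‖T.labelSum x‖ ≤ T.size := by
  induction T with
  | nil => simp [labelSum]
  | node l r ihl ihr =>
    calc ‖(node l r).labelSum x‖ ≤ ‖(1 : ℂ)‖ + ‖x⁻¹ * l.labelSum x‖ + ‖x * r.labelSum x‖ :=
          norm_add₃_le
      _ = 1 + ‖l.labelSum x‖ + ‖r.labelSum x‖ := by simp [hx]
      _ ≤ (node l r).size := by simp only [size]; push_cast; linarith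

section GeneratingFunctions

lemma summable_norm_pow_size {𝕜 : Type*} [NormedDivisionRing 𝕜] {t : 𝕜} (ht : ‖t‖ < 1 / 4) :
    Summable fun T : BinTree => ‖t ^ T.size‖ := by
  simpa using summable_norm_pow_size_mul ht (h := fun _ => 1) (k := 0) (by simp)

lemma tsum_pow_size_eq {𝕜 : Type*} [NormedField 𝕜] [CompleteSpace 𝕜] {t : 𝕜} (ht : ‖t‖ < 1 / 4) :
    ∑' T : BinTree, t ^ T.size = 1 + t * (∑' T : BinTree, t ^ T.size) ^ 2 := by
  have hA := summable_norm_pow_size ht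
  have h := tsum_eq_of_node_eq_sum (ι := Unit) (fun T => t ^ T.size) (fun _ => t)
    (fun _ T => t ^ T.size) (fun _ T => t ^ T.size) (fun _ => hA) (fun _ => hA)
    fun l r => by simp only [size, pow_succ, Finset.univ_unique, Finset.sum_singleton]; ring
  simp only [size, pow_zero, Finset.univ_unique, Finset.sum_singleton] at h
  linear_combination h

variable {t x : ℂ}

lemma summable_norm_pow_size_mul_labelSum (ht : ‖t‖ < 1 / 4) (hx : ‖x‖ = 1) :
    Summable fun T : BinTree => ‖t ^ T.size * T.labelSum x‖ :=
  summable_norm_pow_size_mul ht (k := 1) fun T => by simpa using norm_labelSum_le hx T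

lemma tsum_labelSum_eq (ht : ‖t‖ < 1 / 4) (hx : ‖x‖ = 1) :
    (∑' T : BinTree, t ^ T.size * T.labelSum x) * (1 - t * (x + x⁻¹) * ∑' T : BinTree, t ^ T.size)
      = t * (∑' T : BinTree, t ^ T.size) ^ 2 := by
  have hA := summable_norm_pow_size ht
  have hG := summable_norm_pow_size_mul_labelSum ht hx
  have h := tsum_eq_of_node_eq_sum (fun T => t ^ T.size * T.labelSum x) ![t, t * x⁻¹, t * x]
    ![fun T => t ^ T.size, fun T => t ^ T.size * T.labelSum x, fun T => t ^ T.size]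
    ![fun T => t ^ T.size, fun T => t ^ T.size, fun T => t ^ T.size * T.labelSum x]
    (fun i => by fin_cases i <;> assumption) (fun i => by fin_cases i <;> assumption)
    fun l r => by
      simp only [Fin.sum_univ_three, Matrix.cons_val, size, labelSum, pow_succ, pow_add]; ring
  simp only [Fin.sum_univ_three, Matrix.cons_val, labelSum, mul_zero, zero_add] at h
  linear_combination h

lemma tsum_labelSum_mul_labelSum_inv_eq (ht : ‖t‖ < 1 / 4) (hx : ‖x‖ = 1) :
    (∑' T : BinTree, t ^ T.size * T.labelSum x * T.labelSum x⁻¹)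
        * (1 - 2 * t * ∑' T : BinTree, t ^ T.size)
      = t * (∑' T : BinTree, t ^ T.size) ^ 2
        + t * (x + x⁻¹) * (∑' T : BinTree, t ^ T.size)
          * ((∑' T : BinTree, t ^ T.size * T.labelSum x)
            + ∑' T : BinTree, t ^ T.size * T.labelSum x⁻¹)
        + t * (x ^ 2 + x⁻¹ ^ 2) * (∑' T : BinTree, t ^ T.size * T.labelSum x)
          * ∑' T : BinTree, t ^ T.size * T.labelSum x⁻¹ := by
  have hx0 : x ≠ 0 := norm_ne_zero_iff.mp (by rw [hx]; exact one_ne_zero)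
  have hA := summable_norm_pow_size ht
  have hG := summable_norm_pow_size_mul_labelSum ht hx
  have hG' := summable_norm_pow_size_mul_labelSum ht (by rw [norm_inv, hx, inv_one] : ‖x⁻¹‖ = 1)
  have hF : Summable fun T : BinTree => ‖t ^ T.size * T.labelSum x * T.labelSum x⁻¹‖ := by
    simp_rw [mul_assoc]
    refine summable_norm_pow_size_mul ht (k := 2) fun T => ?_
    rw [norm_mul, sq]
    exact mul_le_mul (norm_labelSum_le hx T) (norm_labelSum_le (by simp [hx]) T)
      (norm_nonneg _) (Nat.cast_nonneg _)
  -- the nine products in `(1 + x⁻¹ L_l(x) + x L_r(x)) * (1 + x L_l(x⁻¹) + x⁻¹ L_r(x⁻¹))`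
  set a : BinTree → ℂ := fun T => t ^ T.size
  set g : BinTree → ℂ := fun T => t ^ T.size * T.labelSum x
  set g' : BinTree → ℂ := fun T => t ^ T.size * T.labelSum x⁻¹
  set f : BinTree → ℂ := fun T => t ^ T.size * T.labelSum x * T.labelSum x⁻¹
  have h := tsum_eq_of_node_eq_sum f
    ![t, t * x, t * x⁻¹, t * x⁻¹, t, t * x⁻¹ ^ 2, t * x, t * x ^ 2, t]
    ![a, g', a, g, f, g, a, g', a] ![a, a, g', a, a, g', g, g, f]
    (fun i => by fin_cases i <;> assumption) (fun i => by fin_cases i <;> assumption)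
    fun l r => by
      simp only [Fin.sum_univ_succ, Fin.sum_univ_zero, Matrix.cons_val, Fin.succ_zero_eq_one,
        Fin.succ_one_eq_two, Fin.reduceSucc, a, g, g', f, size, labelSum, pow_succ, pow_add, inv_inv]
      field_simp
      ring
  simp only [Fin.sum_univ_succ, Fin.sum_univ_zero, Matrix.cons_val, Fin.succ_zero_eq_one,
    Fin.succ_one_eq_two, Fin.reduceSucc, a, g, g', f, labelSum, mul_zero, zero_add, add_zero] at h
  linear_combination h

end GeneratingFunctions

end BinTree

open BinTree

section Bfun

variable {t : ℝ}

lemma one_add_Bfun (ht0 : t ≠ 0) : 1 + Bfun t = (1 - √(1 - 4 * t)) / (2 * t) := by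
  rw [Bfun]; field_simp; ring

lemma Bfun_eq (ht0 : 0 < t) (ht : t ≤ 1 / 4) : Bfun t = t * (1 + Bfun t) ^ 2 := by
  have hs := Real.sq_sqrt (by linarith : 0 ≤ 1 - 4 * t)
  rw [one_add_Bfun ht0.ne', Bfun]
  set s := √(1 - 4 * t)
  field_simp
  linear_combination -hs

lemma Bfun_nonneg (ht0 : 0 < t) (ht : t ≤ 1 / 4) : 0 ≤ Bfun t := by
  have hs := Real.sq_sqrt (by linarith : 0 ≤ 1 - 4 * t)
  have hs0 := Real.sqrt_nonneg (1 - 4 * t)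
  rw [Bfun]
  refine div_nonneg ?_ (by linarith)
  nlinarith

lemma Bfun_lt_one (ht0 : 0 < t) (ht : t < 1 / 4) : Bfun t < 1 := by
  have hs := Real.sq_sqrt (by linarith : 0 ≤ 1 - 4 * t)
  have hs0 : 0 < √(1 - 4 * t) := Real.sqrt_pos.mpr (by linarith)
  rw [Bfun, div_lt_one (by linarith)]
  nlinarith

/-- Of the two roots of `A = 1 + t A²`, the generating function is the one below `2`. -/
lemma tsum_pow_size_eq_one_add_Bfun (ht0 : 0 < t) (ht : t < 1 / 4) :
    ∑' T : BinTree, t ^ T.size = 1 + Bfun t := by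
  have hA := tsum_pow_size_eq (𝕜 := ℝ) (by rwa [Real.norm_of_nonneg ht0.le])
  have hA2 := tsum_pow_size_le_two ht0.le ht.le
  have hB := Bfun_eq ht0 ht.le
  have hB1 := Bfun_lt_one ht0 ht
  set A := ∑' T : BinTree, t ^ T.size
  have hroots : (A - (1 + Bfun t)) * (t * (A + 1 + Bfun t) - 1) = 0 := by
    linear_combination hB - hA
  rcases mul_eq_zero.mp hroots with h | h
  · linarith
  · nlinarith

lemma tsum_ofReal_pow_size_eq_one_add_Bfun (ht0 : 0 < t) (ht : t < 1 / 4) :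
    ∑' T : BinTree, (t : ℂ) ^ T.size = 1 + Bfun t := by
  have h := congrArg ((↑) : ℝ → ℂ) (tsum_pow_size_eq_one_add_Bfun ht0 ht)
  push_cast [Complex.ofReal_tsum] at h
  exact h

end Bfun

lemma exp_I_mul_add_inv (u : ℝ) : exp (I * u) + (exp (I * u))⁻¹ = 2 * Real.cos u := by
  rw [← Complex.exp_neg, Complex.ofReal_cos, Complex.two_cos, neg_mul, mul_comm (u : ℂ)]

lemma eq_closed_form_of_functional_eqs {t B x G G' F : ℂ} (hx : x ≠ 0) (hB : B = t * (1 + B) ^ 2)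
    (hG : G * (1 - t * (x + x⁻¹) * (1 + B)) = t * (1 + B) ^ 2)
    (hG' : G' * (1 - t * (x + x⁻¹) * (1 + B)) = t * (1 + B) ^ 2)
    (hF : F * (1 - 2 * t * (1 + B)) = t * (1 + B) ^ 2 + t * (x + x⁻¹) * (1 + B) * (G + G')
      + t * (x ^ 2 + x⁻¹ ^ 2) * G * G')
    (h1 : 1 + B ≠ 0) (h2 : 1 - B ≠ 0) (h3 : 1 + B - B * (x + x⁻¹) ≠ 0) :
    F = B * (1 + B) * (1 + 2 * B - B ^ 2) / ((1 - B) * (1 + B - B * (x + x⁻¹)) ^ 2) := by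
  have hsq : x ^ 2 + x⁻¹ ^ 2 = (x + x⁻¹) ^ 2 - 2 := by field_simp; ring
  set c := x + x⁻¹
  have ht : t = B / (1 + B) ^ 2 := by rw [eq_div_iff (pow_ne_zero 2 h1)]; linear_combination -hB
  subst ht
  have hGv : G = B * (1 + B) / (1 + B - B * c) := by
    field_simp at hG ⊢; linear_combination hG
  have hG'v : G' = B * (1 + B) / (1 + B - B * c) := by
    field_simp at hG' ⊢; linear_combination hG'
  rw [hGv, hG'v, hsq] at hF
  field_simp at hF ⊢
  linear_combination hF

/-- The specialization `F₂(t, e^{iu}, e^{-iu})` of the two-variable label generating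
function of binary trees equals `B(1+B)(1+2B-B²)/((1-B)(1+B-2B cos u)²)` where
`B = B(t)` satisfies `B = t(1+B)²`. -/
theorem F2_binary_specialization (t u : ℝ) (ht0 : 0 < t) (ht : t < 1/4) :
    (Bfun t : ℂ) = t * (1 + (Bfun t : ℂ))^2 ∧
    (∑' T : BinTree, (t : ℂ)^T.size
        * T.labelSum (Complex.exp (Complex.I * u))
        * T.labelSum (Complex.exp (-Complex.I * u)))
      = (Bfun t : ℂ) * (1 + (Bfun t : ℂ)) * (1 + 2*(Bfun t : ℂ) - (Bfun t : ℂ)^2) /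
        ((1 - (Bfun t : ℂ)) * (1 + (Bfun t : ℂ) - 2*(Bfun t : ℂ) * Real.cos u)^2) := by
  have hB : (Bfun t : ℂ) = t * (1 + Bfun t) ^ 2 := by exact_mod_cast Bfun_eq ht0 ht.le
  refine ⟨hB, ?_⟩
  have hB0 := Bfun_nonneg ht0 ht.le
  have hB1 := Bfun_lt_one ht0 ht
  set x := exp (I * u)
  have hx : ‖x‖ = 1 := by simp [x, Complex.norm_exp]
  have ht' : ‖(t : ℂ)‖ < 1 / 4 := by rwa [Complex.norm_real, Real.norm_of_nonneg ht0.le]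
  have hA := tsum_ofReal_pow_size_eq_one_add_Bfun ht0 ht
  have hG := tsum_labelSum_eq ht' hx
  have hG' := tsum_labelSum_eq ht' (by rwa [norm_inv, inv_eq_one] : ‖x⁻¹‖ = 1)
  have hF := tsum_labelSum_mul_labelSum_inv_eq ht' hx
  rw [inv_inv, add_comm x⁻¹] at hG'
  rw [hA] at hG hG' hF
  have hD : (0 : ℝ) < 1 + Bfun t - Bfun t * (2 * Real.cos u) := by
    nlinarith [Real.cos_le_one u]
  rw [neg_mul, Complex.exp_neg, eq_closed_form_of_functional_eqs (exp_ne_zero _) hB hG hG' hF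
    (by exact_mod_cast (by linarith : (0 : ℝ) < 1 + Bfun t).ne')
    (by exact_mod_cast (sub_pos.mpr hB1).ne')
    (by rw [exp_I_mul_add_inv]; exact_mod_cast hD.ne'), exp_I_mul_add_inv]
  ring
end

section
/- Let S_1 and S_2 be Polish spaces and phi : S_1 -> S_2 an injective continuous map. If (W_n) is a tight sequence of random elements of S_1 such that phi(W_n) converges in distribution in S_2 to some random element Z, then W_n converges in distribution in S_1 to some random element W with phi(W) equal in distribution to Z. -/
/-!
By Prokhorov's theorem the laws of `W_n` lie in a compact set of probability measures, so it
suffices that they have a single cluster point. Pushforward along `φ` is continuous, hence every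
cluster point is mapped to the law of `Z`; and pushforward along `φ` is injective, because an
injective continuous map between Polish spaces is a measurable embedding (Lusin–Souslin).
-/

open MeasureTheory Filter Topology
open scoped ENNReal

namespace MeasureTheory

lemma isTightMeasureSet_of_forall_one_sub_le {ι X : Type*} [TopologicalSpace X] [T2Space X]
    [MeasurableSpace X] [OpensMeasurableSpace X] (μ : ι → ProbabilityMeasure X)
    (h : ∀ ε : ℝ≥0∞, 0 < ε → ∃ K : Set X, IsCompact K ∧ ∀ i, 1 - ε ≤ (μ i : Measure X) K) :
    IsTightMeasureSet {(μ i : Measure X) | i} := by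
  refine isTightMeasureSet_iff_exists_isCompact_measure_compl_le.2 fun ε hε ↦ ?_
  obtain ⟨K, hK, hμK⟩ := h ε hε
  refine ⟨K, hK, ?_⟩
  rintro _ ⟨i, rfl⟩
  rw [prob_compl_eq_one_sub hK.measurableSet]
  exact tsub_le_iff_tsub_le.1 (hμK i)

namespace ProbabilityMeasure

lemma map_injective {X Y : Type*} [MeasurableSpace X] [MeasurableSpace Y] {f : X → Y}
    (hf : MeasurableEmbedding f) :
    Function.Injective fun μ : ProbabilityMeasure X ↦ μ.map hf.measurable.aemeasurable :=
  fun μ μ' h ↦ toMeasure_injective <| hf.map_injective <| by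
    simpa only [toMeasure_map] using congrArg toMeasure h

lemma exists_tendsto_of_isTight_of_tendsto_map {ι X Y : Type*} {l : Filter ι} [l.NeBot]
    [TopologicalSpace X] [T2Space X] [HasOuterApproxClosed X] [MeasurableSpace X] [BorelSpace X]
    [TopologicalSpace Y] [HasOuterApproxClosed Y] [MeasurableSpace Y] [BorelSpace Y]
    {f : X → Y} (hfc : Continuous f) (hf : MeasurableEmbedding f)
    {μ : ι → ProbabilityMeasure X} (htight : IsTightMeasureSet {(μ i : Measure X) | i})
    {ν : ProbabilityMeasure Y}
    (hconv : Tendsto (fun i ↦ (μ i).map hfc.measurable.aemeasurable) l (𝓝 ν)) :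
    ∃ μlim : ProbabilityMeasure X,
      Tendsto μ l (𝓝 μlim) ∧ μlim.map hfc.measurable.aemeasurable = ν := by
  have hK : IsCompact (closure (Set.range μ)) :=
    isCompact_closure_of_isTightMeasureSet (by simpa using htight)
  have hmem : ∀ i, μ i ∈ closure (Set.range μ) := fun i ↦ subset_closure ⟨i, rfl⟩
  have map_eq : ∀ μ', MapClusterPt μ' l μ → μ'.map hfc.measurable.aemeasurable = ν :=
    fun μ' h ↦ eq_of_nhds_neBot <|
      ((continuous_map hfc).continuousAt.mapClusterPt h).clusterPt.mono hconv
  obtain ⟨μlim, -, hμlim⟩ := hK.exists_mapClusterPt (f := l) (u := μ)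
    (tendsto_principal.2 (Eventually.of_forall hmem))
  refine ⟨μlim, hK.tendsto_nhds_of_unique_mapClusterPt (Eventually.of_forall hmem)
    fun μ' _ h ↦ map_injective hf ?_, map_eq μlim hμlim⟩
  exact (map_eq μ' h).trans (map_eq μlim hμlim).symm

end ProbabilityMeasure

end MeasureTheory

/-- Let `S₁`, `S₂` be Polish spaces and `φ : S₁ → S₂` injective and continuous. If `(W_n)`
is a tight sequence of random elements (laws `μ n`) of `S₁` such that `φ(W_n)` converges
in distribution to some `Z` (law `ν`), then `W_n` converges in distribution to some `W`
(law `μlim`) with `φ(W)` distributed as `Z`. -/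
theorem tight_injective_image_convergence
    {S₁ S₂ : Type*}
    [TopologicalSpace S₁] [PolishSpace S₁] [MeasurableSpace S₁] [BorelSpace S₁]
    [TopologicalSpace S₂] [PolishSpace S₂] [MeasurableSpace S₂] [BorelSpace S₂]
    (φ : S₁ → S₂) (hφc : Continuous φ) (hφi : Function.Injective φ)
    (μ : ℕ → ProbabilityMeasure S₁)
    (htight : ∀ ε : ENNReal, 0 < ε → ∃ K : Set S₁, IsCompact K ∧
      ∀ n, 1 - ε ≤ (μ n : Measure S₁) K)
    (ν : ProbabilityMeasure S₂)
    (hconv : Tendsto (fun n => (μ n).map hφc.measurable.aemeasurable) atTop (𝓝 ν)) :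
    ∃ μlim : ProbabilityMeasure S₁,
      Tendsto μ atTop (𝓝 μlim) ∧ μlim.map hφc.measurable.aemeasurable = ν :=
  ProbabilityMeasure.exists_tendsto_of_isTight_of_tendsto_map hφc (hφc.measurableEmbedding hφi)
    (isTightMeasureSet_of_forall_one_sub_le μ htight) hconv
end
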